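/- arXiv:2308.01359 — 2 statements merged into one kernel-verified Lean document; each statement's English description precedes it below -/
import Mathlib

section
/- Let G be a finite simple graph with maximum degree at most Δ, let C be a proper partial coloring of G² with colors from [Δ²+1], and let K be a nonempty set of vertices. Then |Ψ(K)| ≥ |K̊| + 1 − ā_K as a real inequality, i.e., |K|·|Ψ(K)| ≥ |K|·(|K̊| + 1) − Σ_{v∈K} a_v. -/
open Finset

variable {V : Type*} [Fintype V] [DecidableEq V]

/-- Adjacency in the square graph `G²`: distinct vertices at distance at most 2 in `G`. -/
def sqAdj (G : SimpleGraph V) (u v : V) : Prop :=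
  u ≠ v ∧ (G.Adj u v ∨ ∃ w, G.Adj u w ∧ G.Adj w v)

instance (G : SimpleGraph V) [DecidableRel G.Adj] : DecidableRel (sqAdj G) := fun u v =>
  inferInstanceAs (Decidable (u ≠ v ∧ (G.Adj u v ∨ ∃ w, G.Adj u w ∧ G.Adj w v)))

/-- The distance-2 neighborhood `N²(v)`: the neighborhood of `v` in the square graph `G²`. -/
def N2 (G : SimpleGraph V) [DecidableRel G.Adj] (v : V) : Finset V :=
  univ.filter fun u => sqAdj G v u

/-- `C` is a proper partial coloring of `G²`: two vertices adjacent in `G²`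
that are both colored receive distinct colors. -/
def ProperPartial (G : SimpleGraph V) {n : ℕ} (C : V → Option (Fin n)) : Prop :=
  ∀ u v : V, sqAdj G u v → ∀ c : Fin n, C u = some c → C v ≠ some c

/-- `C(S)`: the set of colors used on the colored vertices of `S`. -/
def usedColors {n : ℕ} (C : V → Option (Fin n)) (S : Finset V) : Finset (Fin n) :=
  S.biUnion fun v => (C v).toFinset

/-- The palette of a set `S`: colors not used by any colored vertex of `S`.
For `S = K` this is the clique palette `Ψ(K)`; for `S = N²(v)` it is the palette `Ψ(v)`. -/
def palette {n : ℕ} (C : V → Option (Fin n)) (S : Finset V) : Finset (Fin n) :=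
  univ \ usedColors C S

/-- A colorful matching in `K` w.r.t. `C`: a collection of pairwise disjoint pairs of
distinct vertices of `K`, non-adjacent in `G²`, both colored with the same color. -/
def IsColorfulMatching (G : SimpleGraph V) {n : ℕ} (C : V → Option (Fin n))
    (K : Finset V) (M : Finset (V × V)) : Prop :=
  (∀ p ∈ M, p.1 ≠ p.2 ∧ p.1 ∈ K ∧ p.2 ∈ K ∧ ¬ sqAdj G p.1 p.2 ∧
      C p.1 ≠ none ∧ C p.1 = C p.2) ∧
  ∀ p ∈ M, ∀ q ∈ M, p ≠ q → ({p.1, p.2} : Finset V) ∩ {q.1, q.2} = ∅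

/-!
Since `G` has maximum degree at most `Δ`, every `N²(v)` has at most `Δ²` vertices, so each
anti-degree satisfies `a_v ≥ |K| - Δ²`. On the other hand every vertex of `K` is either
uncolored or contributes at most one color to `C(K)`, so `|Ψ(K)| ≥ Δ² + 1 - |K| + |K̊|`.
Adding `|K|` times the second bound to the sum of the first ones gives the claim.
-/

open Finset

namespace SimpleGraph

variable (G : SimpleGraph V) [DecidableRel G.Adj] {Δ : ℕ}

theorem card_insert_neighborFinset_sdiff_le_degree {v w : V} (hvw : G.Adj v w) :
    #(insert w (G.neighborFinset w \ {v})) ≤ G.degree w := by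
  have hv : {v} ⊆ G.neighborFinset w := by simpa using hvw.symm
  have hpos : 0 < G.degree w := G.degree_pos_iff_exists_adj w |>.2 ⟨v, hvw.symm⟩
  calc #(insert w (G.neighborFinset w \ {v}))
      ≤ #(G.neighborFinset w \ {v}) + 1 := card_insert_le _ _
    _ = G.degree w := by
      rw [card_sdiff_of_subset hv, card_singleton, card_neighborFinset_eq_degree]
      omega

theorem N2_subset_biUnion_neighborFinset (v : V) :
    N2 G v ⊆ (G.neighborFinset v).biUnion fun w => insert w (G.neighborFinset w \ {v}) := by
  intro u hu
  rw [N2, mem_filter] at hu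
  obtain ⟨-, hne, hvu | ⟨w, hvw, hwu⟩⟩ := hu
  · exact mem_biUnion.2 ⟨u, by simpa using hvu, mem_insert_self _ _⟩
  · exact mem_biUnion.2 ⟨w, by simpa using hvw, by simp [hwu, hne.symm]⟩

theorem card_N2_le_sq (hdeg : ∀ v, G.degree v ≤ Δ) (v : V) : #(N2 G v) ≤ Δ ^ 2 :=
  calc #(N2 G v)
      ≤ #(G.neighborFinset v) * Δ :=
        (card_le_card (G.N2_subset_biUnion_neighborFinset v)).trans <|
          card_biUnion_le_card_mul _ _ _ fun w hw =>
            (G.card_insert_neighborFinset_sdiff_le_degree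
              ((G.mem_neighborFinset v w).1 hw)).trans (hdeg w)
    _ ≤ Δ ^ 2 := by
      rw [card_neighborFinset_eq_degree, sq]
      exact Nat.mul_le_mul_right _ (hdeg v)

theorem card_mul_card_sub_sq_le_sum_card_sdiff_N2 (hdeg : ∀ v, G.degree v ≤ Δ)
    (K : Finset V) :
    (#K : ℝ) * (#K - Δ ^ 2) ≤ ∑ v ∈ K, (#(K \ N2 G v) : ℝ) := by
  rw [← nsmul_eq_mul, ← sum_const]
  refine sum_le_sum fun v _ => ?_
  have hK : #K ≤ #(K \ N2 G v) + Δ ^ 2 :=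
    card_le_card_sdiff_add_card.trans (Nat.add_le_add_left (G.card_N2_le_sq hdeg v) _)
  have hK' : (#K : ℝ) ≤ #(K \ N2 G v) + Δ ^ 2 := by exact_mod_cast hK
  linarith

end SimpleGraph

section Colors

variable {α : Type*} {n : ℕ} (C : α → Option (Fin n)) (S : Finset α)

theorem card_usedColors_le_card_colored :
    #(usedColors C S) ≤ #(S.filter fun v => C v ≠ none) :=
  calc #(usedColors C S)
      ≤ ∑ v ∈ S, #(C v).toFinset := card_biUnion_le
    _ = #(S.filter fun v => C v ≠ none) := by
      rw [card_filter]
      exact sum_congr rfl fun v _ => by cases C v <;> rfl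

theorem card_usedColors_add_card_uncolored_le :
    #(usedColors C S) + #(S.filter fun v => C v = none) ≤ #S := by
  have := card_filter_add_card_filter_not (s := S) (p := fun v => C v ≠ none)
  simp only [not_not] at this
  have := card_usedColors_le_card_colored C S
  omega

theorem cast_card_palette : (#(palette C S) : ℝ) = n - #(usedColors C S) := by
  have h := card_le_univ (usedColors C S)
  rw [Fintype.card_fin] at h
  rw [palette, card_univ_sdiff, Fintype.card_fin, Nat.cast_sub h]

end Colors

theorem cliquePalette_ge_uncolored_sub_avgAntiDeg_general
    (G : SimpleGraph V) [DecidableRel G.Adj] (Δ : ℕ)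
    (hdeg : ∀ v, G.degree v ≤ Δ)
    (C : V → Option (Fin (Δ ^ 2 + 1)))
    (K : Finset V) :
    (K.card : ℝ) * (((K.filter fun v => C v = none).card : ℝ) + 1)
        - ∑ v ∈ K, ((K \ N2 G v).card : ℝ)
      ≤ (K.card : ℝ) * (palette C K).card := by
  have hanti := G.card_mul_card_sub_sq_le_sum_card_sdiff_N2 hdeg K
  have hcolors : (#(usedColors C K) : ℝ) + #(K.filter fun v => C v = none) ≤ #K := by
    exact_mod_cast card_usedColors_add_card_uncolored_le C K
  rw [cast_card_palette]
  push_cast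
  linarith [mul_nonneg (Nat.cast_nonneg (α := ℝ) #K) (sub_nonneg.2 hcolors)]

/-- `|Ψ(K)| ≥ |K̊| + 1 − ā_K` as a real inequality:
`|K|·|Ψ(K)| ≥ |K|·(|K̊| + 1) − Σ_{v∈K} a_v`. -/
theorem cliquePalette_ge_uncolored_sub_avgAntiDeg
    (G : SimpleGraph V) [DecidableRel G.Adj] (Δ : ℕ)
    (hdeg : ∀ v, G.degree v ≤ Δ)
    (C : V → Option (Fin (Δ ^ 2 + 1))) (hC : ProperPartial G C)
    (K : Finset V) (hK : K.Nonempty) :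
    (K.card : ℝ) * (((K.filter fun v => C v = none).card : ℝ) + 1)
        - ∑ v ∈ K, ((K \ N2 G v).card : ℝ)
      ≤ (K.card : ℝ) * (palette C K).card :=
  cliquePalette_ge_uncolored_sub_avgAntiDeg_general G Δ hdeg C K
end

section
/- Let G be a finite simple graph with maximum degree at most Δ, let C be a proper partial coloring of G² with colors from [Δ²+1], let K be a set of vertices, let v ∈ K be uncolored, and let M be a colorful matching in K. Then 2·|Ψ(v) ∩ Ψ(K)| ≥ 2·d̊(v) + 2·(Δ² + 1 − d(v)) + |M| − 2·a_v (as an inequality of integers). -/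
open Finset

variable {V : Type*} [Fintype V] [DecidableEq V]

/-! The two palettes intersect in the complement of `C(N²(v) ∪ K)`. Every pair of a colorful
matching in `K` puts two colored vertices on a single color, so
`|C(N²(v) ∪ K)| + |M| ≤ #colored(N²(v)) + |K \ N²(v)| = d(v) - d̊(v) + a_v`. -/

section Colors

variable {α : Type*} {n : ℕ} (C : α → Option (Fin n))

lemma mem_usedColors {S : Finset α} {c : Fin n} :
    c ∈ usedColors C S ↔ ∃ u ∈ S, C u = some c := by
  simp [usedColors, Option.mem_def]

lemma usedColors_union [DecidableEq α] (S T : Finset α) :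
    usedColors C (S ∪ T) = usedColors C S ∪ usedColors C T :=
  union_biUnion

lemma usedColors_mono {S T : Finset α} (h : S ⊆ T) : usedColors C S ⊆ usedColors C T :=
  biUnion_subset_biUnion_of_subset_left _ h

lemma card_usedColors_le (S : Finset α) :
    #(usedColors C S) ≤ #(S.filter fun u => C u ≠ none) := by
  calc #(usedColors C S) ≤ ∑ u ∈ S, #(C u).toFinset := card_biUnion_le
    _ ≤ ∑ u ∈ S, if C u ≠ none then 1 else 0 :=
        sum_le_sum fun u _ => by cases C u <;> simp
    _ = #(S.filter fun u => C u ≠ none) := (card_filter _ _).symm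

lemma palette_inter_palette [DecidableEq α] (S T : Finset α) :
    palette C S ∩ palette C T = palette C (S ∪ T) := by
  rw [palette, palette, palette, usedColors_union, sdiff_union_distrib]

lemma card_palette_add_card_usedColors (S : Finset α) :
    #(palette C S) + #(usedColors C S) = n := by
  rw [palette, card_sdiff_add_card_eq_card (subset_univ _), card_univ, Fintype.card_fin]

lemma card_filter_ne_none_union_le [DecidableEq α] (S T : Finset α) :
    #((S ∪ T).filter fun u => C u ≠ none) ≤ #(S.filter fun u => C u ≠ none) + #(T \ S) := by
  rw [← union_sdiff_self_eq_union, filter_union]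
  exact (card_union_le _ _).trans (Nat.add_le_add_left (card_le_card (filter_subset _ _)) _)

end Colors

namespace IsColorfulMatching

variable {α : Type*} [DecidableEq α] {G : SimpleGraph α} {n : ℕ} {C : α → Option (Fin n)}
  {K : Finset α} {M : Finset (α × α)}

lemma eq_of_mem_of_mem (hM : IsColorfulMatching G C K M) {p q : α × α} (hp : p ∈ M)
    (hq : q ∈ M) {x : α} (hxp : x ∈ ({p.1, p.2} : Finset α)) (hxq : x ∈ ({q.1, q.2} : Finset α)) :
    p = q := by
  by_contra hpq
  simpa [hM.2 p hp q hq hpq] using mem_inter.2 ⟨hxp, hxq⟩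

lemma injOn_snd (hM : IsColorfulMatching G C K M) : Set.InjOn Prod.snd (M : Set (α × α)) :=
  fun p hp q hq hpq => hM.eq_of_mem_of_mem hp hq (x := p.2) (by simp) (by simp [hpq])

lemma fst_notMem_image_snd (hM : IsColorfulMatching G C K M) {p : α × α} (hp : p ∈ M) :
    p.1 ∉ M.image Prod.snd := by
  simp only [mem_image, not_exists, not_and]
  rintro q hq hqp
  obtain rfl := hM.eq_of_mem_of_mem hp hq (x := p.1) (by simp) (by simp [hqp])
  exact (hM.1 p hp).1 hqp.symm

/-- The first endpoint of each matched pair keeps the color of the deleted second one. -/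
lemma usedColors_sdiff_image_snd (hM : IsColorfulMatching G C K M) {T : Finset α}
    (hKT : K ⊆ T) : usedColors C (T \ M.image Prod.snd) = usedColors C T := by
  refine (usedColors_mono C sdiff_subset).antisymm fun c hc => ?_
  obtain ⟨u, hu, hcu⟩ := (mem_usedColors C).1 hc
  rw [mem_usedColors]
  by_cases huD : u ∈ M.image Prod.snd
  · obtain ⟨p, hp, rfl⟩ := mem_image.1 huD
    obtain ⟨-, hp1K, -, -, -, hcp⟩ := hM.1 p hp
    exact ⟨p.1, mem_sdiff.2 ⟨hKT hp1K, hM.fst_notMem_image_snd hp⟩, hcp.trans hcu⟩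
  · exact ⟨u, mem_sdiff.2 ⟨hu, huD⟩, hcu⟩

lemma card_usedColors_add_card_le (hM : IsColorfulMatching G C K M) {T : Finset α}
    (hKT : K ⊆ T) : #(usedColors C T) + #M ≤ #(T.filter fun u => C u ≠ none) := by
  set D := M.image Prod.snd
  have hD : D ⊆ T.filter fun u => C u ≠ none := by
    intro x hx
    obtain ⟨p, hp, rfl⟩ := mem_image.1 hx
    obtain ⟨-, -, hp2K, -, hcolored, hcp⟩ := hM.1 p hp
    exact mem_filter.2 ⟨hKT hp2K, hcp ▸ hcolored⟩
  calc #(usedColors C T) + #M = #(usedColors C (T \ D)) + #D := by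
        rw [hM.usedColors_sdiff_image_snd hKT, card_image_of_injOn hM.injOn_snd]
    _ ≤ #((T \ D).filter fun u => C u ≠ none) + #D :=
        Nat.add_le_add_right (card_usedColors_le C _) _
    _ = #(T.filter fun u => C u ≠ none) := by
        rw [← card_sdiff_add_card_eq_card hD]
        congr 2
        ext
        simp only [mem_filter, mem_sdiff, and_right_comm]

end IsColorfulMatching

theorem two_mul_palette_inter_cliquePalette_general
    (G : SimpleGraph V) [DecidableRel G.Adj] (Δ : ℕ)
    (C : V → Option (Fin (Δ ^ 2 + 1)))
    (K : Finset V) (v : V)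
    (M : Finset (V × V)) (hM : IsColorfulMatching G C K M) :
    2 * ((((N2 G v).filter fun u => C u = none).card : ℤ))
        + 2 * ((Δ : ℤ) ^ 2 + 1 - ((N2 G v).card : ℤ))
        + (M.card : ℤ) - 2 * (((K \ N2 G v).card : ℤ))
      ≤ 2 * ((palette C (N2 G v) ∩ palette C K).card : ℤ) := by
  set S := N2 G v
  have hpalette := card_palette_add_card_usedColors C (S ∪ K)
  have hmatching := hM.card_usedColors_add_card_le (T := S ∪ K) subset_union_right
  have hcolored := card_filter_ne_none_union_le C S K
  have hsplit : #(S.filter fun u => C u = none) + #(S.filter fun u => C u ≠ none) = #S :=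
    card_filter_add_card_filter_not _
  rw [palette_inter_palette, ← Nat.cast_pow]
  omega

/-- `2·|Ψ(v) ∩ Ψ(K)| ≥ 2·d̊(v) + 2·(Δ² + 1 − d(v)) + |M| − 2·a_v` for an uncolored
`v ∈ K` and a colorful matching `M` in `K`. -/
theorem two_mul_palette_inter_cliquePalette
    (G : SimpleGraph V) [DecidableRel G.Adj] (Δ : ℕ)
    (hdeg : ∀ v, G.degree v ≤ Δ)
    (C : V → Option (Fin (Δ ^ 2 + 1))) (hC : ProperPartial G C)
    (K : Finset V) (v : V) (hv : v ∈ K) (hvunc : C v = none)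
    (M : Finset (V × V)) (hM : IsColorfulMatching G C K M) :
    2 * ((((N2 G v).filter fun u => C u = none).card : ℤ))
        + 2 * ((Δ : ℤ) ^ 2 + 1 - ((N2 G v).card : ℤ))
        + (M.card : ℤ) - 2 * (((K \ N2 G v).card : ℤ))
      ≤ 2 * ((palette C (N2 G v) ∩ palette C K).card : ℤ) :=
  two_mul_palette_inter_cliquePalette_general G Δ C K v M hM
end
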